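/- arXiv:1704.08609 — 2 statements merged into one kernel-verified Lean document; each statement's English description precedes it below -/
import Mathlib

section
/- Let $(d_i)_{i=1}^d \subset (0,1/2)$ and suppose $\gamma^{(i,j)}(k) = R_{ij}(k) k^{-d_i - d_j}$ where $R_{ij}(k) \to R_{ij}$ as $k \to \infty$. Then $n\gamma^{(i,j)}(0) + \sum_{k=1}^{n-1}(n-k)\gamma^{(i,j)}(k) + \sum_{k=1}^{n-1}(n-k)\gamma^{(j,i)}(k)$ is asymptotically equivalent to $\frac{R_{ij}+R_{ji}}{(1-d_i-d_j)(2-d_i-d_j)} n^{2-d_i-d_j}$ as $n \to \infty$, provided $R_{ij}+R_{ji} \neq 0$. -/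
open Filter Finset Asymptotics


theorem div_le_div_of_nonneg_right' {a b c : ℝ} (h : a ≤ b) (hc : 0 < c) : a / c ≤ b / c :=
  (div_le_div_iff_of_pos_right hc).mpr h

/-- Sum of powers asymptotics: ∑_{k<n} k^b / n^(b+1) → 1/(b+1) for b > -1. -/
lemma lemA {b : ℝ} (hb : -1 < b) :
    Tendsto (fun n : ℕ => (∑ k ∈ range n, (k:ℝ) ^ b) / (n:ℝ) ^ (b+1)) atTop
      (nhds (1/(b+1))) := by
  have hb1 : (0:ℝ) < b + 1 := by linarith
  rcases eq_or_ne b 0 with rfl | hb0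
  · -- trivial case b = 0
    have : ∀ n : ℕ, 1 ≤ n → (∑ k ∈ range n, (k:ℝ) ^ (0:ℝ)) / (n:ℝ) ^ ((0:ℝ)+1) = 1 := by
      intro n hn
      have hn' : (0:ℝ) < n := by exact_mod_cast hn
      simp [Real.rpow_one, div_self hn'.ne']
    rw [show (1:ℝ)/(0+1) = 1 by norm_num]
    refine Tendsto.congr' ?_ tendsto_const_nhds
    filter_upwards [eventually_ge_atTop 1] with n hn
    exact (this n hn).symm
  -- main bounds
  have key : ∀ n : ℕ, 1 ≤ n →
      (n:ℝ)^(b+1)/(b+1) - ((n:ℝ)^b + 1 + 1/(b+1)) ≤ ∑ k ∈ range n, (k:ℝ) ^ b ∧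
      (∑ k ∈ range n, (k:ℝ) ^ b) ≤ (n:ℝ)^(b+1)/(b+1) + ((n:ℝ)^b + 1 + 1/(b+1)) := by
    intro n hn
    have hn' : (0:ℝ) < n := by exact_mod_cast hn
    have h0b : (0:ℝ) ^ b = 0 := Real.zero_rpow hb0
    have hnbpos : (0:ℝ) ≤ (n:ℝ) ^ b := Real.rpow_nonneg hn'.le b
    have hpos : (0:ℝ) ≤ 1/(b+1) := by positivity
    rcases le_or_gt 0 b with hbge | hblt
    · -- monotone case
      have hmono : MonotoneOn (fun x : ℝ => x ^ b) (Set.Icc ((0:ℕ):ℝ) ((n:ℕ):ℝ)) := by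
        intro x hx y hy hxy
        exact Real.rpow_le_rpow (by simpa using hx.1) hxy hbge
      have hup := hmono.sum_le_integral_Ico (Nat.zero_le n)
      have hlow := hmono.integral_le_sum_Ico (Nat.zero_le n)
      have hint : (∫ x in (0:ℝ)..(n:ℝ), x ^ b) = (n:ℝ)^(b+1)/(b+1) := by
        rw [integral_rpow (Or.inl hb)]
        rw [Real.zero_rpow (by linarith : b + 1 ≠ 0)]
        ring
      rw [Nat.cast_zero] at hup hlow
      rw [hint] at hup hlow
      have hrange : ∑ x ∈ Finset.Ico 0 n, ((x:ℝ)) ^ b = ∑ k ∈ range n, (k:ℝ) ^ b := by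
        rw [Nat.Ico_zero_eq_range]
      constructor
      · -- lower bound
        have : ∑ i ∈ Finset.Ico 0 n, (((i+1:ℕ)):ℝ) ^ b
            = ∑ k ∈ range n, (k:ℝ) ^ b + (n:ℝ)^b := by
          rw [Nat.Ico_zero_eq_range]
          have := Finset.sum_range_succ' (fun k : ℕ => (k:ℝ)^b) n
          rw [Finset.sum_range_succ] at this
          push_cast at this ⊢
          rw [h0b] at this
          linarith [this]
        rw [this] at hlow
        linarith
      · rw [hrange] at hup
        linarith
    · -- antitone case: b < 0
      have hanti : AntitoneOn (fun x : ℝ => x ^ b) (Set.Icc ((1:ℕ):ℝ) ((n:ℕ):ℝ)) := by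
        intro x hx y hy hxy
        exact Real.rpow_le_rpow_of_nonpos (lt_of_lt_of_le one_pos (by simpa using hx.1)) hxy hblt.le
      have hlow := hanti.integral_le_sum_Ico hn
      have hup := hanti.sum_le_integral_Ico hn
      have hint : (∫ x in ((1:ℕ):ℝ)..((n:ℕ):ℝ), x ^ b) = (n:ℝ)^(b+1)/(b+1) - 1/(b+1) := by
        rw [integral_rpow (Or.inl hb)]
        rw [Nat.cast_one, Real.one_rpow]
        ring
      rw [hint] at hlow hup
      have hrange : ∑ x ∈ Finset.Ico 1 n, ((x:ℝ)) ^ b = ∑ k ∈ range n, (k:ℝ) ^ b := by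
        rw [Finset.range_eq_Ico, Finset.sum_eq_sum_Ico_succ_bot (by omega : 0 < n)]
        rw [Nat.cast_zero, h0b, zero_add]
      constructor
      · rw [hrange] at hlow; linarith
      · -- upper: ∑_{range n} = 0^b + 1^b + ∑_{Ico 2 n} ≤ 1 + ∑_{Ico 1 n} (k+1)^b ≤ 1 + ∫
        have h1 : ∑ k ∈ range n, (k:ℝ) ^ b ≤ 1 + ∑ i ∈ Finset.Ico 1 n, (((i+1:ℕ)):ℝ) ^ b := by
          rcases Nat.lt_or_ge n 2 with h2 | h2
          · interval_cases n
            · simp [h0b]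
          · have e1 : ∑ k ∈ range n, (k:ℝ) ^ b
                = 1 + ∑ k ∈ Finset.Ico 2 n, (k:ℝ) ^ b := by
              rw [Finset.range_eq_Ico, Finset.sum_eq_sum_Ico_succ_bot (by omega : 0 < n),
                Finset.sum_eq_sum_Ico_succ_bot (by omega : 1 < n)]
              rw [Nat.cast_zero, h0b, Nat.cast_one, Real.one_rpow]
              ring
            have e2 : ∑ k ∈ Finset.Ico 2 n, (k:ℝ) ^ b
                = ∑ i ∈ Finset.Ico 1 (n-1), (((i+1:ℕ)):ℝ) ^ b := by
              rw [Finset.sum_Ico_eq_sum_range, Finset.sum_Ico_eq_sum_range]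
              refine Finset.sum_congr (by congr 1) fun i _ => ?_
              congr 1
              exact_mod_cast congrArg Nat.cast (by omega : 2 + i = 1 + i + 1)
            have e3 : ∑ i ∈ Finset.Ico 1 (n-1), (((i+1:ℕ)):ℝ) ^ b
                ≤ ∑ i ∈ Finset.Ico 1 n, (((i+1:ℕ)):ℝ) ^ b := by
              apply Finset.sum_le_sum_of_subset_of_nonneg
              · apply Finset.Ico_subset_Ico le_rfl; omega
              · intro i _ _; positivity
            rw [e1, e2]
            linarith
        calc ∑ k ∈ range n, (k:ℝ) ^ b ≤ 1 + ∑ i ∈ Finset.Ico 1 n, (((i+1:ℕ)):ℝ) ^ b := h1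
          _ ≤ 1 + ((n:ℝ)^(b+1)/(b+1) - 1/(b+1)) := by
              have : ∑ i ∈ Finset.Ico 1 n, ((fun x : ℝ => x ^ b) ((i+1:ℕ):ℝ))
                  ≤ (n:ℝ)^(b+1)/(b+1) - 1/(b+1) := hup
              push_cast at this ⊢
              linarith
          _ ≤ (n:ℝ)^(b+1)/(b+1) + ((n:ℝ)^b + 1 + 1/(b+1)) := by linarith
  -- squeeze
  have herr : Tendsto (fun n : ℕ => ((n:ℝ)^b + 1 + 1/(b+1)) / (n:ℝ)^(b+1)) atTop (nhds 0) := by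
    have h1 : Tendsto (fun n : ℕ => (n:ℝ)^b / (n:ℝ)^(b+1)) atTop (nhds 0) := by
      have : Tendsto (fun x : ℝ => x ^ (-(1:ℝ))) atTop (nhds 0) := tendsto_rpow_neg_atTop one_pos
      have h2 := this.comp tendsto_natCast_atTop_atTop (α := ℕ)
      refine Tendsto.congr' ?_ h2
      filter_upwards [eventually_ge_atTop 1] with n hn
      have hn' : (0:ℝ) < n := by exact_mod_cast hn
      simp only [Function.comp]
      rw [← Real.rpow_sub hn']
      norm_num
    have h2 : Tendsto (fun n : ℕ => (1 + 1/(b+1)) / (n:ℝ)^(b+1)) atTop (nhds 0) := by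
      have : Tendsto (fun x : ℝ => x ^ (-(b+1))) atTop (nhds 0) := tendsto_rpow_neg_atTop hb1
      have h3 := this.comp tendsto_natCast_atTop_atTop (α := ℕ)
      have h4 := h3.const_mul (1 + 1/(b+1))
      rw [mul_zero] at h4
      refine Tendsto.congr' ?_ h4
      filter_upwards [eventually_ge_atTop 1] with n hn
      have hn' : (0:ℝ) < n := by exact_mod_cast hn
      simp only [Function.comp]
      rw [Real.rpow_neg hn'.le, div_eq_mul_inv]
      ring
    have := h1.add h2
    rw [add_zero] at this
    refine Tendsto.congr ?_ this
    intro n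
    ring
  have hlim : Tendsto (fun n : ℕ => (1:ℝ)/(b+1) - ((n:ℝ)^b + 1 + 1/(b+1)) / (n:ℝ)^(b+1)) atTop
      (nhds (1/(b+1))) := by
    have := (tendsto_const_nhds (x := (1:ℝ)/(b+1)) (f := atTop (α := ℕ))).sub herr
    simpa using this
  have hlim2 : Tendsto (fun n : ℕ => (1:ℝ)/(b+1) + ((n:ℝ)^b + 1 + 1/(b+1)) / (n:ℝ)^(b+1)) atTop
      (nhds (1/(b+1))) := by
    have := (tendsto_const_nhds (x := (1:ℝ)/(b+1)) (f := atTop (α := ℕ))).add herr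
    simpa using this
  refine tendsto_of_tendsto_of_tendsto_of_le_of_le' hlim hlim2 ?_ ?_
  · filter_upwards [eventually_ge_atTop 1] with n hn
    have hn' : (0:ℝ) < n := by exact_mod_cast hn
    have hnp : (0:ℝ) < (n:ℝ)^(b+1) := Real.rpow_pos_of_pos hn' _
    have e : 1/(b+1) - ((n:ℝ)^b + 1 + 1/(b+1)) / (n:ℝ)^(b+1)
        = ((n:ℝ)^(b+1)/(b+1) - ((n:ℝ)^b + 1 + 1/(b+1))) / (n:ℝ)^(b+1) := by
      field_simp
    rw [e]
    exact div_le_div_of_nonneg_right' ((key n hn).1) hnp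
  · filter_upwards [eventually_ge_atTop 1] with n hn
    have hn' : (0:ℝ) < n := by exact_mod_cast hn
    have hnp : (0:ℝ) < (n:ℝ)^(b+1) := Real.rpow_pos_of_pos hn' _
    have e : 1/(b+1) + ((n:ℝ)^b + 1 + 1/(b+1)) / (n:ℝ)^(b+1)
        = ((n:ℝ)^(b+1)/(b+1) + ((n:ℝ)^b + 1 + 1/(b+1))) / (n:ℝ)^(b+1) := by
      field_simp
    rw [e]
    exact div_le_div_of_nonneg_right' ((key n hn).2) hnp

/-- Weighted version: if ψ → c then ∑_{k<n} ψ(k) k^b ~ c n^(b+1)/(b+1). -/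
lemma lemB {u ψ : ℕ → ℝ} {b c : ℝ} (hb : -1 < b)
    (hu : ∀ k : ℕ, 1 ≤ k → u k = ψ k * (k:ℝ) ^ b) (hψ : Tendsto ψ atTop (nhds c)) :
    Tendsto (fun n : ℕ => (∑ k ∈ range n, u k) / (n:ℝ) ^ (b+1)) atTop (nhds (c/(b+1))) := by
  have hb1 : (0:ℝ) < b + 1 := by linarith
  have hA := lemA hb
  have hg : ∀ k : ℕ, 0 ≤ (k:ℝ) ^ b := fun k => Real.rpow_nonneg (Nat.cast_nonneg k) b
  have hpow : Tendsto (fun n : ℕ => (n:ℝ) ^ (b+1)) atTop atTop :=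
    (tendsto_rpow_atTop hb1).comp tendsto_natCast_atTop_atTop
  have hgtop : Tendsto (fun n : ℕ => ∑ i ∈ range n, (i:ℝ) ^ b) atTop atTop := by
    have h1 := hA.pos_mul_atTop (by positivity : (0:ℝ) < 1/(b+1)) hpow
    refine Tendsto.congr' ?_ h1
    filter_upwards [eventually_ge_atTop 1] with n hn
    have hn' : (0:ℝ) < n := by exact_mod_cast hn
    exact div_mul_cancel₀ _ (Real.rpow_pos_of_pos hn' (b+1)).ne'
  have hfo : (fun k : ℕ => u k - c * (k:ℝ) ^ b) =o[atTop] (fun k : ℕ => (k:ℝ) ^ b) := by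
    have h1 : (fun k : ℕ => ψ k - c) =o[atTop] (fun _ : ℕ => (1:ℝ)) := by
      rw [Asymptotics.isLittleO_one_iff]
      simpa using hψ.sub_const c
    have h2 := h1.mul_isBigO (Asymptotics.isBigO_refl (fun k : ℕ => (k:ℝ) ^ b) atTop)
    refine h2.congr' ?_ ?_
    · filter_upwards [eventually_ge_atTop 1] with k hk
      rw [hu k hk]; ring
    · filter_upwards with k; rw [one_mul]
  have hsum := hfo.sum_range hg hgtop
  have hO : (fun n : ℕ => ∑ i ∈ range n, (i:ℝ) ^ b) =O[atTop] fun n : ℕ => (n:ℝ) ^ (b+1) := by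
    have h1 := hA.isBigO_one (F := ℝ)
    have h2 := h1.mul (Asymptotics.isBigO_refl (fun n : ℕ => (n:ℝ) ^ (b+1)) atTop)
    refine Asymptotics.IsBigO.congr' (h2) ?_ ?_
    · filter_upwards [eventually_ge_atTop 1] with n hn
      have hn' : (0:ℝ) < n := by exact_mod_cast hn
      exact div_mul_cancel₀ _ (Real.rpow_pos_of_pos hn' _).ne'
    · filter_upwards with n; rw [one_mul]
  have h0 : Tendsto (fun n : ℕ => (∑ i ∈ range n, (u i - c * (i:ℝ) ^ b)) / (n:ℝ) ^ (b+1))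
      atTop (nhds 0) := (hsum.trans_isBigO hO).tendsto_div_nhds_zero
  have hfin := h0.add (hA.const_mul c)
  rw [zero_add] at hfin
  have : c * (1/(b+1)) = c/(b+1) := by ring
  rw [this] at hfin
  refine Tendsto.congr ?_ hfin
  intro n
  rw [Finset.sum_sub_distrib, ← Finset.mul_sum]
  ring

/-- Double summation identity. -/
lemma lemC (h : ℕ → ℝ) (n : ℕ) :
    ∑ k ∈ Finset.Icc 1 (n - 1), ((n:ℝ) - (k:ℝ)) * h k
      = ∑ m ∈ range n, (∑ k ∈ Finset.Icc 1 m, h k) := by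
  have key : ∀ N : ℕ, ∑ k ∈ Finset.Icc 1 N, (((N:ℝ)+1) - (k:ℝ)) * h k
      = ∑ m ∈ range (N+1), (∑ k ∈ Finset.Icc 1 m, h k) := by
    intro N
    induction N with
    | zero => simp
    | succ N ih =>
      rw [Finset.sum_Icc_succ_top (by omega : 1 ≤ N + 1),
        Finset.sum_range_succ, ← ih,
        Finset.sum_Icc_succ_top (by omega : 1 ≤ N + 1)]
      push_cast
      have e : ∀ k : ℕ, (((N:ℝ)+1+1) - (k:ℝ)) * h k
          = (((N:ℝ)+1) - (k:ℝ)) * h k + h k := by intro k; ring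
      rw [Finset.sum_congr rfl (fun k _ => e k), Finset.sum_add_distrib]
      ring
  cases n with
  | zero => simp
  | succ m =>
    have := key m
    simpa using this

set_option maxHeartbeats 1000000 in
theorem stmt_0 (di dj : ℝ) (hdi : di ∈ Set.Ioo (0:ℝ) (1/2)) (hdj : dj ∈ Set.Ioo (0:ℝ) (1/2))
    (γij γji Rij Rji : ℕ → ℝ) (Lij Lji : ℝ)
    (hγij : ∀ k : ℕ, 1 ≤ k → γij k = Rij k * (k : ℝ) ^ (-(di + dj)))
    (hγji : ∀ k : ℕ, 1 ≤ k → γji k = Rji k * (k : ℝ) ^ (-(di + dj)))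
    (hRij : Tendsto Rij atTop (nhds Lij)) (hRji : Tendsto Rji atTop (nhds Lji))
    (hne : Lij + Lji ≠ 0) :
    Tendsto (fun n : ℕ =>
      ((n : ℝ) * γij 0 + ∑ k ∈ Finset.Icc 1 (n - 1), ((n : ℝ) - (k : ℝ)) * γij k
        + ∑ k ∈ Finset.Icc 1 (n - 1), ((n : ℝ) - (k : ℝ)) * γji k)
        / ((Lij + Lji) / ((1 - di - dj) * (2 - di - dj)) * (n : ℝ) ^ (2 - di - dj)))
      atTop (nhds 1) := by
  obtain ⟨hdi0, hdi1⟩ := hdi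
  obtain ⟨hdj0, hdj1⟩ := hdj
  set a : ℝ := di + dj with ha
  have ha0 : 0 < a := by positivity
  have ha1 : a < 1 := by rw [ha]; linarith
  set b₁ : ℝ := -a with hb₁
  have hb₁m : -1 < b₁ := by rw [hb₁]; linarith
  have hb₂pos : (0:ℝ) < b₁ + 1 := by rw [hb₁]; linarith
  have hb₃pos : (0:ℝ) < b₁ + 1 + 1 := by linarith
  set L : ℝ := Lij + Lji with hL
  -- the combined sequence
  set v : ℕ → ℝ := fun k => (Rij k + Rji k) * (k:ℝ) ^ b₁ with hv
  have hψ₁ : Tendsto (fun k => Rij k + Rji k) atTop (nhds L) := hRij.add hRji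
  have step1 := lemB (u := v) (ψ := fun k => Rij k + Rji k) hb₁m
    (fun k _ => rfl) hψ₁
  -- T n := ∑_{k < n} v k ;  w m := T (m+1) = ∑_{k ∈ Icc 1 m} (γij k + γji k)
  set T : ℕ → ℝ := fun n => ∑ k ∈ range n, v k with hT
  set w : ℕ → ℝ := fun m => ∑ k ∈ Finset.Icc 1 m, (γij k + γji k) with hw
  have hwT : ∀ m : ℕ, w m = T (m+1) := by
    intro m
    rw [hw, hT]
    simp only []
    rw [Finset.range_eq_Ico, Finset.sum_eq_sum_Ico_succ_bot (Nat.succ_pos m)]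
    have hv0 : v 0 = 0 := by
      rw [hv]; simp only [Nat.cast_zero]
      rw [Real.zero_rpow (by rw [hb₁]; intro h; apply ha0.ne'; linarith)]
      ring
    rw [hv0, zero_add, ← Finset.Ico_add_one_right_eq_Icc]
    refine (Finset.sum_congr rfl fun k hk => ?_).symm
    have hk1 : 1 ≤ k := (Finset.mem_Ico.mp hk).1
    rw [hv, hγij k hk1, hγji k hk1, hb₁, ha]
    ring
  -- step 2 : asymptotics of w
  set ψ₂ : ℕ → ℝ := fun m => w m * (m:ℝ) ^ (-(b₁+1)) with hψ₂def
  have hψ₂lim : Tendsto ψ₂ atTop (nhds (L / (b₁+1))) := by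
    have f₁ : Tendsto (fun m : ℕ => T (m+1) / ((m+1:ℕ):ℝ) ^ (b₁+1)) atTop
        (nhds (L / (b₁+1))) := step1.comp (tendsto_add_atTop_nat 1)
    have f₂ : Tendsto (fun m : ℕ => (((m+1:ℕ)):ℝ) ^ (b₁+1) * (m:ℝ) ^ (-(b₁+1))) atTop
        (nhds 1) := by
      have hq : Tendsto (fun m : ℕ => ((m:ℝ)+1)/(m:ℝ)) atTop (nhds 1) := by
        have hinv : Tendsto (fun m : ℕ => ((m:ℝ))⁻¹) atTop (nhds 0) :=
          tendsto_natCast_atTop_atTop.inv_tendsto_atTop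
        have := (tendsto_const_nhds (x := (1:ℝ)) (f := atTop (α := ℕ))).add hinv
        rw [add_zero] at this
        refine Tendsto.congr' ?_ this
        filter_upwards [eventually_ge_atTop 1] with m hm
        have hm' : (0:ℝ) < m := by exact_mod_cast hm
        field_simp
      have hc : ContinuousAt (fun x : ℝ => x ^ (b₁+1)) 1 :=
        Real.continuousAt_rpow_const 1 (b₁+1) (Or.inl one_ne_zero)
      have := (hc.tendsto.comp hq)
      rw [Real.one_rpow] at this
      refine Tendsto.congr' ?_ this
      filter_upwards [eventually_ge_atTop 1] with m hm
      have hm' : (0:ℝ) < m := by exact_mod_cast hm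
      simp only [Function.comp]
      rw [Real.div_rpow (by positivity) hm'.le, Real.rpow_neg hm'.le, div_eq_mul_inv]
      push_cast
      ring
    have := f₁.mul f₂
    rw [mul_one] at this
    refine Tendsto.congr' ?_ this
    filter_upwards [eventually_ge_atTop 1] with m hm
    have hm' : (0:ℝ) < m := by exact_mod_cast hm
    have hp : (((m+1:ℕ)):ℝ) ^ (b₁+1) ≠ 0 :=
      (Real.rpow_pos_of_pos (by positivity) _).ne'
    rw [hψ₂def]
    simp only []
    rw [hwT m, ← mul_assoc, div_mul_cancel₀ _ hp]
  have hu₂ : ∀ m : ℕ, 1 ≤ m → w m = ψ₂ m * (m:ℝ) ^ (b₁+1) := by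
    intro m hm
    have hm' : (0:ℝ) < m := by exact_mod_cast hm
    rw [hψ₂def]
    simp only []
    rw [Real.rpow_neg hm'.le, mul_assoc,
      inv_mul_cancel₀ (Real.rpow_pos_of_pos hm' _).ne', mul_one]
  have step2 := lemB (u := w) (ψ := ψ₂) (by linarith : (-1:ℝ) < b₁ + 1) hu₂ hψ₂lim
  -- term 0
  have term0 : Tendsto (fun n : ℕ => (n:ℝ) * γij 0 / (n:ℝ) ^ (b₁+1+1)) atTop (nhds 0) := by
    have hbase : Tendsto (fun x : ℝ => x ^ (-(b₁+1))) atTop (nhds 0) :=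
      tendsto_rpow_neg_atTop hb₂pos
    have h2 := (hbase.comp tendsto_natCast_atTop_atTop).const_mul (γij 0)
    rw [mul_zero] at h2
    refine Tendsto.congr' ?_ h2
    filter_upwards [eventually_ge_atTop 1] with n hn
    have hn' : (0:ℝ) < n := by exact_mod_cast hn
    simp only [Function.comp]
    rw [show ((n:ℝ)) * γij 0 = γij 0 * (n:ℝ) ^ (1:ℝ) by rw [Real.rpow_one]; ring,
      mul_div_assoc, ← Real.rpow_sub hn',
      show (1:ℝ) - (b₁+1+1) = -(b₁+1) from by ring]
  -- combine
  have hsum : Tendsto (fun n : ℕ =>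
      ((n : ℝ) * γij 0 + ∑ k ∈ Finset.Icc 1 (n - 1), ((n : ℝ) - (k : ℝ)) * γij k
        + ∑ k ∈ Finset.Icc 1 (n - 1), ((n : ℝ) - (k : ℝ)) * γji k) / (n:ℝ) ^ (b₁+1+1))
      atTop (nhds (L / (b₁+1) / (b₁+1+1))) := by
    have := term0.add step2
    rw [zero_add] at this
    refine Tendsto.congr ?_ this
    intro n
    rw [← add_div]
    congr 1
    have hcomb : ∑ k ∈ Finset.Icc 1 (n - 1), ((n : ℝ) - (k : ℝ)) * γij k
        + ∑ k ∈ Finset.Icc 1 (n - 1), ((n : ℝ) - (k : ℝ)) * γji k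
        = ∑ k ∈ Finset.Icc 1 (n - 1), ((n : ℝ) - (k : ℝ)) * (γij k + γji k) := by
      rw [← Finset.sum_add_distrib]
      exact Finset.sum_congr rfl fun k _ => by ring
    rw [add_assoc, hcomb, lemC (fun k => γij k + γji k) n]
  -- final
  have hCne : L / ((1 - di - dj) * (2 - di - dj)) ≠ 0 := by
    apply div_ne_zero hne
    have h1 : (0:ℝ) < 1 - di - dj := by linarith
    have h2 : (0:ℝ) < 2 - di - dj := by linarith
    exact mul_ne_zero h1.ne' h2.ne'
  have hCeq : L / (b₁+1) / (b₁+1+1) = L / ((1 - di - dj) * (2 - di - dj)) := by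
    rw [div_div]
    congr 1
    rw [hb₁, ha]; ring
  have hfin := hsum.div_const (L / ((1 - di - dj) * (2 - di - dj)))
  rw [hCeq, div_self hCne] at hfin
  have hpow : ∀ n : ℕ, (n:ℝ) ^ (b₁+1+1) = (n:ℝ) ^ (2 - di - dj) := by
    intro n
    rw [show b₁+1+1 = 2 - di - dj from by rw [hb₁, ha]; ring]
  refine Tendsto.congr ?_ hfin
  intro n
  rw [div_div, mul_comm ((n:ℝ) ^ (b₁+1+1)), hpow n]
end

section
/- Let $X, Y$ be jointly Gaussian standard normal random variables with correlation $r$, and let $B^{-1}(n) = (n^{d_{\max\{l,m\}} - 1/2})_{l,m=1}^d$. Given the stationary Gaussian process with $E(X_k^{(i)} X_{k+h}^{(j)}) = R_{ij}(h)h^{-d_i-d_j}$, $R_{ij}(h)\to R_{ij}$, and $d_i \in (0,1/4)$ for all $i$, the normalized sample autocovariance covariance entries satisfy: there is $N$ and a constant $C$ (depending on $d$, $R$) such that for all $n \geq N$ and all operators $T$ with $\max_{s,r}|T_{sr}| \leq 1$, each entry of $\mathrm{Cov}(B^{-1}(n)\hat\Gamma_{n,p}B^{-1}(n), B^{-1}(n)\hat\Gamma_{n,q}B^{-1}(n))(T)$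 is bounded by $C$ in absolute value. -/
open Filter Finset MeasureTheory Matrix

theorem stmt_18 {Ω : Type*} [MeasurableSpace Ω] (μ : Measure Ω) [IsProbabilityMeasure μ]
    (d : ℕ) (X : ℕ → Ω → Fin d → ℝ)
    (ds : Fin d → ℝ) (hds : ∀ i, ds i ∈ Set.Ioo (0:ℝ) (1/4))
    (R : Fin d → Fin d → ℕ → ℝ) (Rl : Fin d → Fin d → ℝ)
    (hR : ∀ i j, Tendsto (fun h => R i j h) atTop (nhds (Rl i j)))
    (C : ℕ → Fin d → ℕ → Fin d → ℝ)
    (hC : ∀ s i t j, C s i t j = ∫ ω, X s ω i * X t ω j ∂μ)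
    (hcov : ∀ (k h : ℕ) (i j : Fin d), 1 ≤ h →
      C k i (k + h) j = R i j h * (h : ℝ) ^ (-(ds i) - ds j))
    (hstat0 : ∀ (k : ℕ) (i j : Fin d), C k i k j = C 0 i 0 j)
    (hWick : ∀ (t1 t2 t3 t4 : ℕ) (i1 i2 i3 i4 : Fin d),
      ∫ ω, X t1 ω i1 * X t2 ω i2 * X t3 ω i3 * X t4 ω i4 ∂μ
        = C t1 i1 t2 i2 * C t3 i3 t4 i4 + C t1 i1 t3 i3 * C t2 i2 t4 i4
          + C t1 i1 t4 i4 * C t2 i2 t3 i3)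
    (hint4 : ∀ (t1 t2 t3 t4 : ℕ) (i1 i2 i3 i4 : Fin d),
      Integrable (fun ω => X t1 ω i1 * X t2 ω i2 * X t3 ω i3 * X t4 ω i4) μ)
    (B : ℕ → Matrix (Fin d) (Fin d) ℝ)
    (hB : ∀ n (l m : Fin d), B n l m = (n : ℝ) ^ (ds (max l m) - 1/2))
    (Γhat : ℕ → ℕ → Ω → Matrix (Fin d) (Fin d) ℝ)
    (hΓ : ∀ n h ω, Γhat n h ω = (n : ℝ)⁻¹ • ∑ k ∈ Finset.Icc 1 n,
      Matrix.of fun i j => X k ω i * X (k + h) ω j)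
    (p q : ℕ) :
    ∃ (N : ℕ) (Cbd : ℝ), ∀ n, N ≤ n → ∀ T : Matrix (Fin d) (Fin d) ℝ,
      (∀ s r, |T s r| ≤ 1) → ∀ i j : Fin d,
        |∫ ω, Matrix.trace ((B n * Γhat n p ω * B n)ᵀ * T)
            * (B n * Γhat n q ω * B n) i j ∂μ| ≤ Cbd := by
  classical
  -- uniform bound M on the covariance kernel C
  have hRbd : ∀ i j, ∃ Mij : ℝ, ∀ h, |R i j h| ≤ Mij := by
    intro i j
    obtain ⟨Mij, hMij⟩ := ((hR i j).abs).bddAbove_range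
    exact ⟨Mij, fun h => hMij ⟨h, rfl⟩⟩
  choose MR hMR using hRbd
  obtain ⟨M0, hM0⟩ :=
    Finite.exists_le (fun pr : Fin d × Fin d => max (MR pr.1 pr.2) |C 0 pr.1 0 pr.2|)
  set M : ℝ := max M0 0 with hMdef
  have hMnn : 0 ≤ M := le_max_right _ _
  have hMR' : ∀ i j h, |R i j h| ≤ M := fun i j h =>
    (hMR i j h).trans (((le_max_left _ _).trans (hM0 (i, j))).trans (le_max_left _ _))
  have hC00 : ∀ i j, |C 0 i 0 j| ≤ M := fun i j =>
    ((le_max_right _ _).trans (hM0 (i, j))).trans (le_max_left _ _)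
  have key : ∀ s t : ℕ, s < t → ∀ i j, |C s i t j| ≤ M := by
    intro s t hst i j
    have h1 : 1 ≤ t - s := by omega
    have hts : t = s + (t - s) := by omega
    rw [hts, hcov s (t - s) i j h1, abs_mul]
    have hpow : |((t - s : ℕ) : ℝ) ^ (-(ds i) - ds j)| ≤ 1 := by
      rw [abs_of_nonneg (Real.rpow_nonneg (Nat.cast_nonneg _) _)]
      apply Real.rpow_le_one_of_one_le_of_nonpos
      · exact_mod_cast h1
      · have hi := (hds i).1
        have hj := (hds j).1
        linarith
    calc |R i j (t - s)| * |((t - s : ℕ) : ℝ) ^ (-(ds i) - ds j)|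
        ≤ M * 1 := mul_le_mul (hMR' i j _) hpow (abs_nonneg _) hMnn
      _ = M := mul_one M
  have hCbd : ∀ (s : ℕ) (i : Fin d) (t : ℕ) (j : Fin d), |C s i t j| ≤ M := by
    intro s i t j
    rcases lt_trichotomy s t with h | h | h
    · exact key s t h i j
    · subst h; rw [hstat0]; exact hC00 i j
    · have hsym : C s i t j = C t j s i := by
        rw [hC, hC]
        exact integral_congr_ae (Filter.Eventually.of_forall fun ω => mul_comm _ _)
      rw [hsym]; exact key t s h j i
  have hW4 : ∀ (t1 t2 t3 t4 : ℕ) (i1 i2 i3 i4 : Fin d),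
      |∫ ω, X t1 ω i1 * X t2 ω i2 * X t3 ω i3 * X t4 ω i4 ∂μ| ≤ 3 * M ^ 2 := by
    intro t1 t2 t3 t4 i1 i2 i3 i4
    rw [hWick]
    have hb : ∀ (a b c e : ℝ), |a| ≤ M → |b| ≤ M → |c| ≤ M → |e| ≤ M →
        |a * b| ≤ M ^ 2 := by
      intro a b c e ha hb _ _
      rw [abs_mul, sq]
      exact mul_le_mul ha hb (abs_nonneg _) hMnn
    have b1 : |C t1 i1 t2 i2 * C t3 i3 t4 i4| ≤ M ^ 2 := by
      rw [abs_mul, sq]; exact mul_le_mul (hCbd _ _ _ _) (hCbd _ _ _ _) (abs_nonneg _) hMnn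
    have b2 : |C t1 i1 t3 i3 * C t2 i2 t4 i4| ≤ M ^ 2 := by
      rw [abs_mul, sq]; exact mul_le_mul (hCbd _ _ _ _) (hCbd _ _ _ _) (abs_nonneg _) hMnn
    have b3 : |C t1 i1 t4 i4 * C t2 i2 t3 i3| ≤ M ^ 2 := by
      rw [abs_mul, sq]; exact mul_le_mul (hCbd _ _ _ _) (hCbd _ _ _ _) (abs_nonneg _) hMnn
    calc |C t1 i1 t2 i2 * C t3 i3 t4 i4 + C t1 i1 t3 i3 * C t2 i2 t4 i4
          + C t1 i1 t4 i4 * C t2 i2 t3 i3|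
        ≤ |C t1 i1 t2 i2 * C t3 i3 t4 i4 + C t1 i1 t3 i3 * C t2 i2 t4 i4|
          + |C t1 i1 t4 i4 * C t2 i2 t3 i3| := abs_add_le _ _
      _ ≤ |C t1 i1 t2 i2 * C t3 i3 t4 i4| + |C t1 i1 t3 i3 * C t2 i2 t4 i4|
          + |C t1 i1 t4 i4 * C t2 i2 t3 i3| := by
            have := abs_add_le (C t1 i1 t2 i2 * C t3 i3 t4 i4) (C t1 i1 t3 i3 * C t2 i2 t4 i4)
            linarith
      _ ≤ 3 * M ^ 2 := by linarith
  refine ⟨1, (d : ℝ) ^ 6 * (3 * M ^ 2), ?_⟩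
  intro n hn T hT i j
  have hn0 : (n : ℝ) ≠ 0 := Nat.cast_ne_zero.mpr (by omega)
  have hn1 : (1 : ℝ) ≤ (n : ℝ) := by exact_mod_cast hn
  have hB1 : ∀ l m : Fin d, |B n l m| ≤ 1 := by
    intro l m
    rw [hB n l m, abs_of_nonneg (Real.rpow_nonneg (Nat.cast_nonneg _) _)]
    apply Real.rpow_le_one_of_one_le_of_nonpos hn1
    have := (hds (max l m)).2
    linarith
  have hΓe : ∀ (h : ℕ) (ω : Ω) (a b : Fin d),
      Γhat n h ω a b = (n : ℝ)⁻¹ * ∑ k ∈ Finset.Icc 1 n, X k ω a * X (k + h) ω b := by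
    intro h ω a b
    rw [hΓ]
    simp [Matrix.sum_apply]
  have hGint : ∀ a b a' b' : Fin d,
      Integrable (fun ω => Γhat n p ω a b * Γhat n q ω a' b') μ ∧
      |∫ ω, Γhat n p ω a b * Γhat n q ω a' b' ∂μ| ≤ 3 * M ^ 2 := by
    intro a b a' b'
    have hprod : ∀ ω, Γhat n p ω a b * Γhat n q ω a' b'
        = ((n : ℝ)⁻¹ * (n : ℝ)⁻¹) * ∑ k ∈ Finset.Icc 1 n, ∑ l ∈ Finset.Icc 1 n,
            X k ω a * X (k + p) ω b * X l ω a' * X (l + q) ω b' := by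
      intro ω
      rw [hΓe p ω a b, hΓe q ω a' b', mul_mul_mul_comm, Finset.sum_mul_sum]
      congr 1
      exact Finset.sum_congr rfl fun k _ => Finset.sum_congr rfl fun l _ => by ring
    have hcard : ((Finset.Icc 1 n).card : ℝ) = (n : ℝ) := by
      rw [Nat.card_Icc]; simp
    constructor
    · have heq : (fun ω => Γhat n p ω a b * Γhat n q ω a' b')
          = fun ω => ((n : ℝ)⁻¹ * (n : ℝ)⁻¹) * ∑ k ∈ Finset.Icc 1 n, ∑ l ∈ Finset.Icc 1 n,
              X k ω a * X (k + p) ω b * X l ω a' * X (l + q) ω b' := funext hprod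
      rw [heq]
      exact (integrable_finset_sum _ fun k _ => integrable_finset_sum _ fun l _ =>
        hint4 k (k + p) l (l + q) a b a' b').const_mul _
    · have hI : ∫ ω, Γhat n p ω a b * Γhat n q ω a' b' ∂μ
          = ((n : ℝ)⁻¹ * (n : ℝ)⁻¹) * ∑ k ∈ Finset.Icc 1 n, ∑ l ∈ Finset.Icc 1 n,
              ∫ ω, X k ω a * X (k + p) ω b * X l ω a' * X (l + q) ω b' ∂μ := by
        simp only [hprod]
        rw [integral_const_mul]
        congr 1
        rw [integral_finset_sum _ (fun k _ => integrable_finset_sum _ fun l _ =>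
          hint4 k (k + p) l (l + q) a b a' b')]
        exact Finset.sum_congr rfl fun k _ =>
          integral_finset_sum _ fun l _ => hint4 k (k + p) l (l + q) a b a' b'
      have hsum : |∑ k ∈ Finset.Icc 1 n, ∑ l ∈ Finset.Icc 1 n,
            ∫ ω, X k ω a * X (k + p) ω b * X l ω a' * X (l + q) ω b' ∂μ|
          ≤ (n : ℝ) * ((n : ℝ) * (3 * M ^ 2)) := by
        calc |∑ k ∈ Finset.Icc 1 n, ∑ l ∈ Finset.Icc 1 n,
              ∫ ω, X k ω a * X (k + p) ω b * X l ω a' * X (l + q) ω b' ∂μ|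
            ≤ ∑ k ∈ Finset.Icc 1 n, |∑ l ∈ Finset.Icc 1 n,
              ∫ ω, X k ω a * X (k + p) ω b * X l ω a' * X (l + q) ω b' ∂μ| :=
              Finset.abs_sum_le_sum_abs _ _
          _ ≤ ∑ _k ∈ Finset.Icc 1 n, ((n : ℝ) * (3 * M ^ 2)) := by
              refine Finset.sum_le_sum fun k _ => ?_
              calc |∑ l ∈ Finset.Icc 1 n,
                    ∫ ω, X k ω a * X (k + p) ω b * X l ω a' * X (l + q) ω b' ∂μ|
                  ≤ ∑ l ∈ Finset.Icc 1 n,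
                    |∫ ω, X k ω a * X (k + p) ω b * X l ω a' * X (l + q) ω b' ∂μ| :=
                    Finset.abs_sum_le_sum_abs _ _
                _ ≤ ∑ _l ∈ Finset.Icc 1 n, (3 * M ^ 2) :=
                    Finset.sum_le_sum fun l _ => hW4 _ _ _ _ _ _ _ _
                _ = (n : ℝ) * (3 * M ^ 2) := by
                    rw [Finset.sum_const, nsmul_eq_mul, hcard]
          _ = (n : ℝ) * ((n : ℝ) * (3 * M ^ 2)) := by
              rw [Finset.sum_const, nsmul_eq_mul, hcard]
      rw [hI, abs_mul, abs_of_nonneg (by positivity : (0:ℝ) ≤ (n : ℝ)⁻¹ * (n : ℝ)⁻¹)]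
      calc (n : ℝ)⁻¹ * (n : ℝ)⁻¹ * |∑ k ∈ Finset.Icc 1 n, ∑ l ∈ Finset.Icc 1 n,
            ∫ ω, X k ω a * X (k + p) ω b * X l ω a' * X (l + q) ω b' ∂μ|
          ≤ (n : ℝ)⁻¹ * (n : ℝ)⁻¹ * ((n : ℝ) * ((n : ℝ) * (3 * M ^ 2))) :=
            mul_le_mul_of_nonneg_left hsum (by positivity)
        _ = 3 * M ^ 2 := by field_simp
  have hmul3 : ∀ (G : Matrix (Fin d) (Fin d) ℝ) (s r : Fin d),
      (B n * G * B n) s r = ∑ a, ∑ b, (B n s a * B n b r) * G a b := by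
    intro G s r
    simp only [Matrix.mul_apply, Finset.sum_mul]
    rw [Finset.sum_comm]
    exact Finset.sum_congr rfl fun a _ => Finset.sum_congr rfl fun b _ => by ring
  have htr : ∀ (A : Matrix (Fin d) (Fin d) ℝ),
      Matrix.trace (Aᵀ * T) = ∑ s, ∑ r, A s r * T s r := by
    intro A
    simp only [Matrix.trace, Matrix.diag, Matrix.mul_apply, Matrix.transpose_apply]
    exact Finset.sum_comm
  have hF : ∀ ω, Matrix.trace ((B n * Γhat n p ω * B n)ᵀ * T) * (B n * Γhat n q ω * B n) i j
      = ∑ z : (Fin d × Fin d) × (Fin d × Fin d) × (Fin d × Fin d),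
          (T z.2.1.1 z.2.1.2 * (B n z.2.1.1 z.2.2.1 * B n z.2.2.2 z.2.1.2)
            * (B n i z.1.1 * B n z.1.2 j))
          * (Γhat n p ω z.2.2.1 z.2.2.2 * Γhat n q ω z.1.1 z.1.2) := by
    intro ω
    rw [htr]
    simp only [hmul3, Fintype.sum_prod_type]
    simp only [Finset.sum_mul, Finset.mul_sum]
    refine Finset.sum_congr rfl fun s _ => Finset.sum_congr rfl fun r _ =>
      Finset.sum_congr rfl fun a _ => Finset.sum_congr rfl fun b _ =>
      Finset.sum_congr rfl fun a' _ => Finset.sum_congr rfl fun b' _ => by ring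
  have hIeq : ∫ ω, Matrix.trace ((B n * Γhat n p ω * B n)ᵀ * T)
        * (B n * Γhat n q ω * B n) i j ∂μ
      = ∑ z : (Fin d × Fin d) × (Fin d × Fin d) × (Fin d × Fin d),
          (T z.2.1.1 z.2.1.2 * (B n z.2.1.1 z.2.2.1 * B n z.2.2.2 z.2.1.2)
            * (B n i z.1.1 * B n z.1.2 j))
          * ∫ ω, Γhat n p ω z.2.2.1 z.2.2.2 * Γhat n q ω z.1.1 z.1.2 ∂μ := by
    simp only [hF]
    rw [integral_finset_sum _ fun z _ => ((hGint z.2.2.1 z.2.2.2 z.1.1 z.1.2).1.const_mul _)]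
    exact Finset.sum_congr rfl fun z _ => integral_const_mul _ _
  rw [hIeq]
  have hcoeff : ∀ z : (Fin d × Fin d) × (Fin d × Fin d) × (Fin d × Fin d),
      |T z.2.1.1 z.2.1.2 * (B n z.2.1.1 z.2.2.1 * B n z.2.2.2 z.2.1.2)
        * (B n i z.1.1 * B n z.1.2 j)| ≤ 1 := by
    intro z
    rw [abs_mul, abs_mul, abs_mul, abs_mul]
    calc |T z.2.1.1 z.2.1.2| * (|B n z.2.1.1 z.2.2.1| * |B n z.2.2.2 z.2.1.2|)
          * (|B n i z.1.1| * |B n z.1.2 j|)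
        ≤ 1 * (1 * 1) * (1 * 1) := by
          gcongr <;> first | exact hT _ _ | exact hB1 _ _
      _ = 1 := by norm_num
  calc |∑ z : (Fin d × Fin d) × (Fin d × Fin d) × (Fin d × Fin d),
        (T z.2.1.1 z.2.1.2 * (B n z.2.1.1 z.2.2.1 * B n z.2.2.2 z.2.1.2)
          * (B n i z.1.1 * B n z.1.2 j))
        * ∫ ω, Γhat n p ω z.2.2.1 z.2.2.2 * Γhat n q ω z.1.1 z.1.2 ∂μ|
      ≤ ∑ z : (Fin d × Fin d) × (Fin d × Fin d) × (Fin d × Fin d),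
        |(T z.2.1.1 z.2.1.2 * (B n z.2.1.1 z.2.2.1 * B n z.2.2.2 z.2.1.2)
          * (B n i z.1.1 * B n z.1.2 j))
        * ∫ ω, Γhat n p ω z.2.2.1 z.2.2.2 * Γhat n q ω z.1.1 z.1.2 ∂μ| :=
        Finset.abs_sum_le_sum_abs _ _
    _ ≤ ∑ _z : (Fin d × Fin d) × (Fin d × Fin d) × (Fin d × Fin d), (3 * M ^ 2) := by
        refine Finset.sum_le_sum fun z _ => ?_
        rw [abs_mul]
        calc |T z.2.1.1 z.2.1.2 * (B n z.2.1.1 z.2.2.1 * B n z.2.2.2 z.2.1.2)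
              * (B n i z.1.1 * B n z.1.2 j)|
            * |∫ ω, Γhat n p ω z.2.2.1 z.2.2.2 * Γhat n q ω z.1.1 z.1.2 ∂μ|
            ≤ 1 * (3 * M ^ 2) :=
              mul_le_mul (hcoeff z) (hGint z.2.2.1 z.2.2.2 z.1.1 z.1.2).2
                (abs_nonneg _) zero_le_one
          _ = 3 * M ^ 2 := one_mul _
    _ = (d : ℝ) ^ 6 * (3 * M ^ 2) := by
        rw [Finset.sum_const, nsmul_eq_mul, Finset.card_univ]
        simp only [Fintype.card_prod, Fintype.card_fin]
        push_cast
        ring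
end
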